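/- arXiv:1304.2699 — 4 statements merged into one kernel-verified Lean document; each statement's English description precedes it below -/
import Mathlib

section
/- For every r, n ∈ ℕ (r, n ≥ 1), the number ρ_r(n) of ordered r-tuples (k_1,…,k_r) ∈ {1,…,n}^r such that gcd(k_1,…,k_r) is regular (mod n) satisfies ρ_r(n) = Σ_{d || n} φ_r(d), where the sum runs over the unitary divisors d of n. -/
open Finset
open scoped Classical

/-- `k` is regular (mod `n`): there is an integer `x` with `k² x ≡ k (mod n)`. -/
def IsRegularMod (k n : ℕ) : Prop := ∃ x : ℤ, (n : ℤ) ∣ (k : ℤ) ^ 2 * x - (k : ℤ)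

/-- The unitary divisors of `n`: divisors `d` of `n` with `gcd(d, n/d) = 1`. -/
def unitaryDivisors (n : ℕ) : Finset ℕ := n.divisors.filter fun d => Nat.Coprime d (n / d)

/-- The Jordan function `φ_r(n)`: the number of `r`-tuples
`(k_1,…,k_r) ∈ {1,…,n}^r` with `gcd(k_1,…,k_r)` coprime to `n`. -/
noncomputable def jordanPhi (r n : ℕ) : ℕ :=
  ((Fintype.piFinset fun _ : Fin r => Finset.Icc 1 n).filter
    fun t => Nat.Coprime (Finset.univ.gcd t) n).card

/-- `ρ_r(n)`: the number of `r`-tuples `(k_1,…,k_r) ∈ {1,…,n}^r`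
with `gcd(k_1,…,k_r)` regular (mod `n`). -/
noncomputable def rhoR (r n : ℕ) : ℕ :=
  ((Fintype.piFinset fun _ : Fin r => Finset.Icc 1 n).filter
    fun t => IsRegularMod (Finset.univ.gcd t) n).card

/-!
Write `e = gcd(k, n)`, `k = k' e`, `n = n' e` with `k'` and `n'` coprime. Then
`gcd(k², n) = e · gcd(e, n')`, and `k` is regular mod `n` (i.e. `gcd(k², n) ∣ k`) exactly when
`e` is coprime to `n' = n / e`, i.e. when `gcd(k, n)` is a unitary divisor of `n`. Sorting the
tuples by `e = gcd(k₁, …, kᵣ, n)`, dividing by `e` identifies each class with the tuples counted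
by `φ_r(n / e)`; finally `d ↦ n / d` permutes the unitary divisors.
-/

theorem mem_unitaryDivisors {n d : ℕ} :
    d ∈ unitaryDivisors n ↔ d ∣ n ∧ n ≠ 0 ∧ Nat.Coprime d (n / d) := by
  rw [unitaryDivisors, mem_filter, Nat.mem_divisors, and_assoc]

theorem div_mem_unitaryDivisors {n d : ℕ} (hd : d ∈ unitaryDivisors n) :
    n / d ∈ unitaryDivisors n := by
  obtain ⟨hdn, hn, hcop⟩ := mem_unitaryDivisors.1 hd
  rw [mem_unitaryDivisors, Nat.div_div_self hdn hn]
  exact ⟨Nat.div_dvd_of_dvd hdn, hn, hcop.symm⟩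

theorem sum_unitaryDivisors_div {M : Type*} [AddCommMonoid M] (n : ℕ) (f : ℕ → M) :
    ∑ d ∈ unitaryDivisors n, f (n / d) = ∑ d ∈ unitaryDivisors n, f d := by
  have hinv {d : ℕ} (hd : d ∈ unitaryDivisors n) : n / (n / d) = d :=
    Nat.div_div_self (mem_unitaryDivisors.1 hd).1 (mem_unitaryDivisors.1 hd).2.1
  exact sum_nbij' (n / ·) (n / ·) (fun _ => div_mem_unitaryDivisors)
    (fun _ => div_mem_unitaryDivisors) (fun _ => hinv) (fun _ => hinv) fun _ _ => rfl

theorem isRegularMod_iff_gcd_sq_dvd (k n : ℕ) : IsRegularMod k n ↔ Nat.gcd (k ^ 2) n ∣ k := by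
  rw [← Int.gcd_natCast_natCast, Nat.cast_pow, Int.gcd_dvd_iff, IsRegularMod]
  constructor
  · rintro ⟨x, c, hc⟩
    exact ⟨x, -c, by linear_combination -hc⟩
  · rintro ⟨x, y, h⟩
    exact ⟨x, -y, by linear_combination -h⟩

theorem isRegularMod_mul_iff {k n e : ℕ} (he : 0 < e) (hkn : Nat.Coprime k n) :
    IsRegularMod (k * e) (n * e) ↔ Nat.Coprime e n := by
  have hgcd : Nat.gcd ((k * e) ^ 2) (n * e) = Nat.gcd e n * e := by
    rw [show (k * e) ^ 2 = k ^ 2 * e * e by ring, Nat.gcd_mul_right,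
      Nat.Coprime.gcd_mul_left_cancel e (hkn.pow_left 2)]
  rw [isRegularMod_iff_gcd_sq_dvd, hgcd, Nat.mul_dvd_mul_iff_right he]
  exact ⟨fun h => Nat.eq_one_of_dvd_coprimes hkn h (Nat.gcd_dvd_right e n),
    fun h => by rw [Nat.Coprime.gcd_eq_one h]; exact one_dvd k⟩

theorem isRegularMod_iff_gcd_mem_unitaryDivisors {k n : ℕ} (hn : n ≠ 0) :
    IsRegularMod k n ↔ Nat.gcd k n ∈ unitaryDivisors n := by
  have he : 0 < Nat.gcd k n := Nat.gcd_pos_of_pos_right k (Nat.pos_of_ne_zero hn)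
  obtain ⟨k', n', hcop, hk, hn'⟩ := Nat.exists_coprime k n
  rw [mem_unitaryDivisors, Nat.div_eq_of_eq_mul_left he hn']
  calc IsRegularMod k n ↔ IsRegularMod (k' * Nat.gcd k n) (n' * Nat.gcd k n) := by
        rw [← hk, ← hn']
    _ ↔ Nat.Coprime (Nat.gcd k n) n' := isRegularMod_mul_iff he hcop
    _ ↔ _ := by simp only [Nat.gcd_dvd_right, hn, ne_eq, not_false_eq_true, true_and]

def tupleBox (r n : ℕ) : Finset (Fin r → ℕ) := Fintype.piFinset fun _ => Icc 1 n

theorem rhoR_eq_card (r n : ℕ) :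
    rhoR r n = #{t ∈ tupleBox r n | IsRegularMod (univ.gcd t) n} := rfl

theorem jordanPhi_eq_card (r n : ℕ) :
    jordanPhi r n = #{t ∈ tupleBox r n | Nat.Coprime (univ.gcd t) n} := rfl

theorem mul_mem_tupleBox_iff {r e m : ℕ} (he : 0 < e) {s : Fin r → ℕ} :
    (fun i => e * s i) ∈ tupleBox r (e * m) ↔ s ∈ tupleBox r m := by
  simp only [tupleBox, Fintype.mem_piFinset, mem_Icc, Nat.one_le_iff_ne_zero, mul_ne_zero_iff,
    he.ne', ne_eq, not_false_eq_true, true_and, Nat.mul_le_mul_left_iff he]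

theorem gcd_gcd_mul_left_eq_iff {r e m : ℕ} (he : 0 < e) {s : Fin r → ℕ} :
    Nat.gcd (univ.gcd fun i => e * s i) (e * m) = e ↔ Nat.Coprime (univ.gcd s) m := by
  rw [Finset.gcd_mul_left, normalize_eq, Nat.gcd_mul_left, Nat.Coprime]
  exact mul_eq_left₀ he.ne'

theorem card_filter_gcd_gcd_eq (r : ℕ) {n e : ℕ} (he : 0 < e) (hen : e ∣ n) :
    #{t ∈ tupleBox r n | Nat.gcd (univ.gcd t) n = e} = jordanPhi r (n / e) := by
  obtain ⟨m, rfl⟩ := hen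
  have hinj : Function.Injective fun (s : Fin r → ℕ) i => e * s i :=
    fun s s' h => funext fun i => Nat.eq_of_mul_eq_mul_left he (congrFun h i)
  rw [Nat.mul_div_cancel_left m he, jordanPhi_eq_card, eq_comm,
    ← card_image_of_injective _ hinj]
  congr 1
  ext t
  simp only [mem_filter, mem_image]
  constructor
  · rintro ⟨s, ⟨hs, hcop⟩, rfl⟩
    exact ⟨(mul_mem_tupleBox_iff he).2 hs, (gcd_gcd_mul_left_eq_iff he).2 hcop⟩
  · rintro ⟨ht, hgcd⟩
    have hdvd (i : Fin r) : e ∣ t i :=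
      hgcd ▸ (Nat.gcd_dvd_left _ _).trans (Finset.gcd_dvd (mem_univ i))
    obtain ⟨s, rfl⟩ : ∃ s : Fin r → ℕ, t = fun i => e * s i :=
      ⟨fun i => t i / e, funext fun i => (Nat.mul_div_cancel' (hdvd i)).symm⟩
    exact ⟨s, ⟨(mul_mem_tupleBox_iff he).1 ht, (gcd_gcd_mul_left_eq_iff he).1 hgcd⟩, rfl⟩

theorem rhoR_eq_sum_unitaryDivisors_jordanPhi_general (r n : ℕ) (hn : 1 ≤ n) :
    rhoR r n = ∑ d ∈ unitaryDivisors n, jordanPhi r d := by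
  have hn0 : n ≠ 0 := Nat.one_le_iff_ne_zero.mp hn
  calc rhoR r n = #{t ∈ tupleBox r n | Nat.gcd (univ.gcd t) n ∈ unitaryDivisors n} := by
        simp only [rhoR_eq_card, isRegularMod_iff_gcd_mem_unitaryDivisors hn0]
    _ = ∑ e ∈ unitaryDivisors n, #{t ∈ tupleBox r n | Nat.gcd (univ.gcd t) n = e} :=
        (sum_card_fiberwise_eq_card_filter _ _ _).symm
    _ = ∑ e ∈ unitaryDivisors n, jordanPhi r (n / e) := by
        refine sum_congr rfl fun e he => ?_
        obtain ⟨hen, -, -⟩ := mem_unitaryDivisors.1 he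
        exact card_filter_gcd_gcd_eq r (Nat.pos_of_dvd_of_pos hen hn) hen
    _ = ∑ d ∈ unitaryDivisors n, jordanPhi r d := sum_unitaryDivisors_div n (jordanPhi r)

theorem rhoR_eq_sum_unitaryDivisors_jordanPhi (r n : ℕ) (hr : 1 ≤ r) (hn : 1 ≤ n) :
    rhoR r n = ∑ d ∈ unitaryDivisors n, jordanPhi r d :=
  rhoR_eq_sum_unitaryDivisors_jordanPhi_general r n hn
end

section
/- For every r ∈ ℕ, the arithmetic function ρ_r, where ρ_r(n) is the number of ordered r-tuples (k_1,…,k_r) ∈ {1,…,n}^r such that gcd(k_1,…,k_r) is regular (mod n), is multiplicative, and for every prime power p^ν (ν ∈ ℕ, ν ≥ 1) one has ρ_r(p^ν) = p^{rν} − p^{r(ν−1)} + 1. -/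
/-!
Regularity of `k` mod `n` amounts to `gcd(k², n) ∣ k`. This condition only depends on
`gcd(k, n)`, hence for `k = gcd(k_1, …, k_r)` only on the residues of the `k_i` mod `n`, and it
splits along coprime factors of `n`. Counting residue tuples in `(ℤ/n)^r` instead of tuples in
`{1, …, n}^r`, the Chinese remainder theorem gives multiplicativity. For `n = p^ν` the condition
reads `p ∤ k ∨ p^ν ∣ k`, so the regular tuples are those not all divisible by `p`, of which
there are `p^{rν} - p^{r(ν-1)}`, together with the constant tuple `(p^ν, …, p^ν)`.
-/

open Finset
open scoped Classical

theorem isRegularMod_gcd_iff (k n : ℕ) : IsRegularMod (Nat.gcd k n) n ↔ IsRegularMod k n := by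
  have hsq : Nat.gcd (Nat.gcd k n ^ 2) n = Nat.gcd (k ^ 2) n := by
    refine Nat.dvd_antisymm
      (Nat.gcd_dvd_gcd_of_dvd_left _ (pow_dvd_pow_of_dvd (Nat.gcd_dvd_left k n) 2))
      (Nat.dvd_gcd ?_ (Nat.gcd_dvd_right _ _))
    rw [← Nat.pow_gcd_pow]
    exact Nat.gcd_dvd_gcd_of_dvd_right _ (dvd_pow_self n two_ne_zero)
  rw [isRegularMod_iff_gcd_sq_dvd, isRegularMod_iff_gcd_sq_dvd, hsq, Nat.dvd_gcd_iff,
    and_iff_left (Nat.gcd_dvd_right _ _)]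

theorem Nat.gcd_finset_gcd_congr {ι : Type*} (s : Finset ι) {t u : ι → ℕ} {n : ℕ}
    (h : ∀ i ∈ s, t i ≡ u i [MOD n]) : Nat.gcd (s.gcd t) n = Nat.gcd (s.gcd u) n := by
  refine Nat.dvd_left_iff_eq.mp fun d => ?_
  simp only [Nat.dvd_gcd_iff, Finset.dvd_gcd_iff]
  exact ⟨fun ⟨ht, hd⟩ => ⟨fun i hi => ((h i hi).dvd_iff hd).mp (ht i hi), hd⟩,
    fun ⟨hu, hd⟩ => ⟨fun i hi => ((h i hi).dvd_iff hd).mpr (hu i hi), hd⟩⟩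

theorem isRegularMod_finset_gcd_congr {ι : Type*} (s : Finset ι) {t u : ι → ℕ} {n : ℕ}
    (h : ∀ i ∈ s, t i ≡ u i [MOD n]) :
    IsRegularMod (s.gcd t) n ↔ IsRegularMod (s.gcd u) n := by
  rw [← isRegularMod_gcd_iff, Nat.gcd_finset_gcd_congr s h, isRegularMod_gcd_iff]

theorem isRegularMod_mul_iff_s1 {k m n : ℕ} (h : m.Coprime n) :
    IsRegularMod k (m * n) ↔ IsRegularMod k m ∧ IsRegularMod k n := by
  simp only [isRegularMod_iff_gcd_sq_dvd, Nat.Coprime.gcd_mul _ h]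
  exact ⟨fun hd => ⟨dvd_of_mul_right_dvd hd, dvd_of_mul_left_dvd hd⟩,
    fun ⟨hm, hn⟩ => (Nat.Coprime.gcd_both _ _ h).mul_dvd_of_dvd_of_dvd hm hn⟩

theorem isRegularMod_prime_pow_iff {k p ν : ℕ} (hp : p.Prime) :
    IsRegularMod k (p ^ ν) ↔ ¬p ∣ k ∨ p ^ ν ∣ k := by
  rw [isRegularMod_iff_gcd_sq_dvd]
  constructor
  · intro hd
    by_contra! ⟨hpk, hpν⟩
    have hk : k ≠ 0 := by rintro rfl; exact hpν (dvd_zero _)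
    obtain ⟨e, k', hpk', rfl⟩ := Nat.exists_eq_pow_mul_and_not_dvd hk p hp.ne_one
    have he : e ≠ 0 := by rintro rfl; simp_all
    have heν : e < ν := by
      by_contra! hle
      exact hpν ((pow_dvd_pow p hle).trans (dvd_mul_right _ _))
    -- `p ^ (e + 1)` divides both `k ^ 2` and `p ^ ν`, but not `k = p ^ e * k'`.
    have hsq : p ^ (e + 1) ∣ (p ^ e * k') ^ 2 :=
      calc p ^ (e + 1) ∣ p ^ (e * 2) := pow_dvd_pow p (by omega)
        _ = (p ^ e) ^ 2 := pow_mul p e 2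
        _ ∣ (p ^ e * k') ^ 2 := pow_dvd_pow_of_dvd (dvd_mul_right _ _) 2
    have hdvd : p ^ (e + 1) ∣ p ^ e * k' := (Nat.dvd_gcd hsq (pow_dvd_pow p heν)).trans hd
    rw [pow_succ, Nat.mul_dvd_mul_iff_left (pow_pos hp.pos e)] at hdvd
    exact hpk' hdvd
  · rintro (h | h)
    · rw [((hp.coprime_iff_not_dvd.mpr h).symm.pow 2 ν).gcd_eq_one]
      exact one_dvd k
    · exact (Nat.gcd_dvd_right _ _).trans h

theorem ZMod.natCast_val_sub_one_add_one {n : ℕ} [NeZero n] (x : ZMod n) :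
    (((x - 1).val + 1 : ℕ) : ZMod n) = x := by
  simp

theorem ZMod.val_cast_modEq {m n : ℕ} [NeZero m] [NeZero n] (x : ZMod n) :
    (x.cast : ZMod m).val ≡ x.val [MOD m] := by
  rw [ZMod.cast_eq_val, ZMod.val_natCast]
  exact Nat.mod_modEq _ _

section Tuples

variable {ι : Type*} [Fintype ι] [DecidableEq ι]

theorem card_filter_piFinset_Icc_eq_card_filter_zmod (n : ℕ) [NeZero n]
    (P : (ι → ℕ) → Prop) (hP : ∀ t u : ι → ℕ, (∀ i, t i ≡ u i [MOD n]) → (P t ↔ P u)) :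
    #{t ∈ Fintype.piFinset fun _ => Icc 1 n | P t} =
      #{v : ι → ZMod n | P fun i => (v i).val} := by
  -- a residue `x` is represented in `{1, …, n}` by `(x - 1).val + 1`
  apply Finset.card_nbij' (fun t i => (t i : ZMod n)) (fun v i => (v i - 1).val + 1)
  · intro t ht
    simp only [coe_filter, Fintype.mem_piFinset, Set.mem_ofPred_eq, mem_univ, true_and] at ht ⊢
    refine (hP _ _ fun i => ?_).mp ht.2
    rw [ZMod.val_natCast]
    exact (Nat.mod_modEq _ _).symm
  · intro v hv
    simp only [coe_filter, Fintype.mem_piFinset, Set.mem_ofPred_eq, mem_univ, true_and,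
      mem_Icc] at hv ⊢
    refine ⟨fun i => ⟨Nat.le_add_left 1 _, ZMod.val_lt _⟩, (hP _ _ fun i => ?_).mpr hv⟩
    rw [← ZMod.natCast_eq_natCast_iff, ZMod.natCast_val_sub_one_add_one, ZMod.natCast_zmod_val]
  · intro t ht
    simp only [coe_filter, Fintype.mem_piFinset, Set.mem_ofPred_eq, mem_Icc] at ht
    funext i
    obtain ⟨h1, h2⟩ := ht.1 i
    show ((t i : ZMod n) - 1).val + 1 = t i
    rw [← Nat.cast_one, ← Nat.cast_sub h1, ZMod.val_natCast, Nat.mod_eq_of_lt (by omega)]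
    omega
  · intro v _
    funext i
    exact ZMod.natCast_val_sub_one_add_one (v i)

theorem card_filter_piFinset_Icc_forall_dvd (n d : ℕ)
    [DecidablePred fun t : ι → ℕ => ∀ i, d ∣ t i] :
    #{t ∈ Fintype.piFinset fun _ : ι => Icc 1 n | ∀ i, d ∣ t i} =
      (n / d) ^ Fintype.card ι := by
  have hpi : {t ∈ Fintype.piFinset fun _ : ι => Icc 1 n | ∀ i, d ∣ t i} =
      Fintype.piFinset fun _ => {x ∈ Icc 1 n | d ∣ x} := by
    ext t
    simp only [mem_filter, Fintype.mem_piFinset, forall_and]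
  rw [hpi, Fintype.card_piFinset, prod_const, card_univ, ← Nat.Ioc_filter_dvd_card_eq_div,
    ← Icc_add_one_left_eq_Ioc, zero_add]

theorem isRegularMod_univ_gcd_prime_pow_iff {p ν : ℕ} (hp : p.Prime) {t : ι → ℕ}
    (ht : t ∈ Fintype.piFinset fun _ => Icc 1 (p ^ ν)) :
    IsRegularMod (univ.gcd t) (p ^ ν) ↔ (¬∀ i, p ∣ t i) ∨ t = fun _ => p ^ ν := by
  simp only [Fintype.mem_piFinset, mem_Icc] at ht
  have hconst : (∀ i, p ^ ν ∣ t i) ↔ t = fun _ => p ^ ν :=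
    ⟨fun h => funext fun i => le_antisymm (ht i).2 (Nat.le_of_dvd (ht i).1 (h i)),
      fun h i => h ▸ dvd_rfl⟩
  simp only [isRegularMod_prime_pow_iff hp, Finset.dvd_gcd_iff, mem_univ, forall_const, hconst]

end Tuples

theorem rhoR_eq_card_filter_zmod (r n : ℕ) [NeZero n] :
    rhoR r n = #{v : Fin r → ZMod n | IsRegularMod (univ.gcd fun i => (v i).val) n} :=
  card_filter_piFinset_Icc_eq_card_filter_zmod n _
    fun _ _ h => isRegularMod_finset_gcd_congr univ fun i _ => h i

theorem rhoR_one (r : ℕ) : rhoR r 1 = 1 := by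
  rw [rhoR_eq_card_filter_zmod, filter_true_of_mem fun _ _ => ⟨0, by simp⟩]
  simp

theorem rhoR_mul (r : ℕ) {m n : ℕ} (h : m.Coprime n) :
    rhoR r (m * n) = rhoR r m * rhoR r n := by
  rcases Nat.eq_zero_or_pos m with rfl | hm
  · simp only [(Nat.coprime_zero_left n).mp h, rhoR_one, mul_one]
  rcases Nat.eq_zero_or_pos n with rfl | hn
  · simp only [(Nat.coprime_zero_right m).mp h, rhoR_one, one_mul]
  have : NeZero m := ⟨hm.ne'⟩
  have : NeZero n := ⟨hn.ne'⟩
  have : NeZero (m * n) := ⟨(Nat.mul_pos hm hn).ne'⟩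
  have hfst (x : ZMod (m * n)) : x.val ≡ (ZMod.chineseRemainder h x).1.val [MOD m] := by
    simpa [ZMod.chineseRemainder] using (ZMod.val_cast_modEq x).symm
  have hsnd (x : ZMod (m * n)) : x.val ≡ (ZMod.chineseRemainder h x).2.val [MOD n] := by
    simpa [ZMod.chineseRemainder] using (ZMod.val_cast_modEq x).symm
  let e : (Fin r → ZMod (m * n)) ≃ (Fin r → ZMod m) × (Fin r → ZMod n) :=
    (Equiv.piCongrRight fun _ => (ZMod.chineseRemainder h).toEquiv).trans
      (Equiv.arrowProdEquivProdArrow _ _ _)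
  rw [rhoR_eq_card_filter_zmod, rhoR_eq_card_filter_zmod, rhoR_eq_card_filter_zmod,
    ← card_product, ← filter_product, univ_product_univ]
  refine card_equiv e fun v => ?_
  simp only [mem_filter, mem_univ, true_and, isRegularMod_mul_iff_s1 h]
  exact and_congr (isRegularMod_finset_gcd_congr _ fun i _ => hfst (v i))
    (isRegularMod_finset_gcd_congr _ fun i _ => hsnd (v i))

theorem rhoR_prime_pow (r : ℕ) {p ν : ℕ} (hp : p.Prime) (hν : 1 ≤ ν) :
    rhoR r (p ^ ν) = p ^ (r * ν) - p ^ (r * (ν - 1)) + 1 := by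
  set S := Fintype.piFinset fun _ : Fin r => Icc 1 (p ^ ν)
  have hregular : {t ∈ S | IsRegularMod (univ.gcd t) (p ^ ν)} =
      insert (fun _ => p ^ ν) {t ∈ S | ¬∀ i, p ∣ t i} := by
    ext t
    by_cases ht : t ∈ S
    · simp only [mem_filter, mem_insert, ht, true_and,
        isRegularMod_univ_gcd_prime_pow_iff hp ht, or_comm]
    · simp only [mem_filter, mem_insert, ht, false_and, or_false, false_iff]
      rintro rfl
      exact ht (Fintype.mem_piFinset.mpr fun _ => right_mem_Icc.mpr (Nat.one_le_pow _ _ hp.pos))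
  have hconst : (fun _ => p ^ ν) ∉ {t ∈ S | ¬∀ i, p ∣ t i} := by
    simp [dvd_pow_self p (by omega : ν ≠ 0)]
  have hcompl : #{t ∈ S | ¬∀ i, p ∣ t i} = #S - #{t ∈ S | ∀ i, p ∣ t i} := by
    rw [← card_filter_add_card_filter_not (s := S) fun t => ∀ i, p ∣ t i]
    omega
  rw [rhoR, hregular, card_insert_of_notMem hconst, hcompl]
  unfold S
  rw [card_filter_piFinset_Icc_forall_dvd, Fintype.card_piFinset_const, Fintype.card_fin,
    Nat.card_Icc, Nat.add_sub_cancel,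
    Nat.div_eq_of_eq_mul_left hp.pos (pow_sub_one_mul (by omega) p).symm,
    ← pow_mul, ← pow_mul, mul_comm ν, mul_comm (ν - 1)]

theorem rhoR_multiplicative_and_prime_pow_general (r : ℕ) :
    (rhoR r 1 = 1 ∧
      ∀ m n : ℕ, Nat.Coprime m n → rhoR r (m * n) = rhoR r m * rhoR r n) ∧
    ∀ p ν : ℕ, p.Prime → 1 ≤ ν →
      rhoR r (p ^ ν) = p ^ (r * ν) - p ^ (r * (ν - 1)) + 1 :=
  ⟨⟨rhoR_one r, fun _ _ => rhoR_mul r⟩, fun _ _ hp hν => rhoR_prime_pow r hp hν⟩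

theorem rhoR_multiplicative_and_prime_pow (r : ℕ) (hr : 1 ≤ r) :
    (rhoR r 1 = 1 ∧
      ∀ m n : ℕ, Nat.Coprime m n → rhoR r (m * n) = rhoR r m * rhoR r n) ∧
    ∀ p ν : ℕ, p.Prime → 1 ≤ ν →
      rhoR r (p ^ ν) = p ^ (r * ν) - p ^ (r * (ν - 1)) + 1 :=
  rhoR_multiplicative_and_prime_pow_general r
end

section
/- For every n ∈ ℕ, Σ_{k ∈ Reg_n} gcd(k−1, n) = Σ_{d || n} φ(d) τ(d) = Π_{p^ν || n} (p^{ν−1}(p−1)(ν+1) + 1), where the middle sum runs over the unitary divisors d of n and the product runs over the prime powers p^ν exactly dividing n; φ is Euler's totient function and τ(d) is the number of divisors of d. -/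
open Finset
open scoped Classical

/-- `Reg_n`, the set of `k ∈ {1,…,n}` that are regular (mod `n`). -/
noncomputable def Reg (n : ℕ) : Finset ℕ :=
  (Finset.Icc 1 n).filter fun k => IsRegularMod k n

/-! Both sides are multiplicative in `n`, so it suffices to compare them at prime powers.
Reducing modulo `n`, the regular `k` become the von Neumann regular elements of `ZMod n`, and the
Chinese remainder theorem splits both these elements and the gcds along coprime factors. Modulo a
prime power, a local ring, the regular elements are `0` and the units; the units contribute
`φ(p^ν) τ(p^ν)` by Menon's identity and `0` contributes `1`. The unitary divisors of `p^ν` are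
`1` and `p^ν`, which gives the same value `φ(p^ν) τ(p^ν) + 1`. -/

def IsVonNeumannRegular {M : Type*} [Monoid M] (a : M) : Prop := ∃ x, a * x * a = a

section VonNeumannRegular

variable {M N F : Type*} [Monoid M] [Monoid N]

theorem isVonNeumannRegular_map_iff [EquivLike F M N] [MulEquivClass F M N] (e : F) (a : M) :
    IsVonNeumannRegular (e a) ↔ IsVonNeumannRegular a := by
  constructor
  · rintro ⟨x, hx⟩
    refine ⟨EquivLike.inv e x, EquivLike.injective e ?_⟩
    simpa only [map_mul, EquivLike.apply_inv_apply] using hx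
  · rintro ⟨x, hx⟩
    exact ⟨e x, by rw [← map_mul, ← map_mul, hx]⟩

theorem Prod.isVonNeumannRegular_iff (a : M × N) :
    IsVonNeumannRegular a ↔ IsVonNeumannRegular a.1 ∧ IsVonNeumannRegular a.2 := by
  constructor
  · rintro ⟨x, hx⟩
    exact ⟨⟨x.1, congrArg Prod.fst hx⟩, ⟨x.2, congrArg Prod.snd hx⟩⟩
  · rintro ⟨⟨x, hx⟩, ⟨y, hy⟩⟩
    exact ⟨(x, y), Prod.ext hx hy⟩

end VonNeumannRegular

/-- In a local ring, `a = a x a` forces `a (1 - x a) = 0`, and one of `x a`, `1 - x a` is a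
unit. -/
theorem IsLocalRing.isVonNeumannRegular_iff {R : Type*} [CommRing R] [IsLocalRing R] (a : R) :
    IsVonNeumannRegular a ↔ IsUnit a ∨ a = 0 := by
  constructor
  · rintro ⟨x, hx⟩
    have hzero : a * (1 - x * a) = 0 := by linear_combination -hx
    rcases IsLocalRing.isUnit_or_isUnit_one_sub_self (x * a) with hunit | hunit
    · exact Or.inl (isUnit_of_mul_isUnit_right hunit)
    · exact Or.inr ((hunit.mul_left_eq_zero).1 hzero)
  · rintro (⟨u, rfl⟩ | rfl)
    · exact ⟨↑u⁻¹, by simp⟩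
    · exact ⟨0, by simp⟩

theorem Nat.gcd_eq_sum_totient {n : ℕ} (hn : n ≠ 0) (x : ℕ) :
    x.gcd n = ∑ d ∈ n.divisors with d ∣ x, d.totient := by
  have hdiv : {d ∈ n.divisors | d ∣ x} = (x.gcd n).divisors := by
    ext d
    simp only [mem_filter, Nat.mem_divisors, Nat.dvd_gcd_iff, ne_eq,
      Nat.gcd_eq_zero_iff, hn, and_false, not_false_eq_true, and_true]
    tauto
  rw [hdiv, Nat.sum_totient]

namespace ZMod

theorem val_natCast_sub_one {n k : ℕ} (hk : k ∈ Icc 1 n) : ((k : ZMod n) - 1).val = k - 1 := by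
  obtain ⟨hk1, hkn⟩ := mem_Icc.1 hk
  rw [← Nat.cast_one, ← Nat.cast_sub hk1, val_cast_of_lt (by omega)]

theorem gcd_val_natCast (x n : ℕ) : (x : ZMod n).val.gcd n = x.gcd n := by
  rw [val_natCast, ← Nat.gcd_rec, Nat.gcd_comm]

section Units

variable {n d : ℕ} [NeZero n]

theorem dvd_val_sub_one_iff_unitsMap_eq_one (hd : d ∣ n) (u : (ZMod n)ˣ) :
    d ∣ ((u : ZMod n) - 1).val ↔ unitsMap hd u = 1 := by
  rw [Units.ext_iff, unitsMap_val, Units.val_one, ← sub_eq_zero,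
    ← map_one (castHom hd (ZMod d)), ← castHom_apply (h := hd), ← map_sub, castHom_apply,
    cast_eq_val, natCast_eq_zero_iff]

theorem card_ker_unitsMap_mul_totient (hd : d ∣ n) :
    Nat.card (unitsMap hd).ker * d.totient = n.totient := by
  have : NeZero d := ⟨fun h => NeZero.ne n (Nat.eq_zero_of_zero_dvd (h ▸ hd))⟩
  rw [← card_units_eq_totient, ← card_units_eq_totient, ← Nat.card_eq_fintype_card,
    ← Nat.card_eq_fintype_card, ← (unitsMap hd).ker.card_mul_index, Subgroup.index_ker,
    MonoidHom.range_eq_top_of_surjective _ (unitsMap_surjective hd), Subgroup.card_top]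

/-- Menon's identity. Writing `gcd(x, n) = ∑_{d ∣ gcd(x, n)} φ(d)`, each divisor `d` of `n`
contributes `φ(d)` times the number of units `u ≡ 1 (mod d)`, which is `φ(n)/φ(d)`. -/
theorem sum_units_gcd_val_sub_one :
    ∑ u : (ZMod n)ˣ, ((u : ZMod n) - 1).val.gcd n = n.totient * n.divisors.card := by
  have hcount : ∀ d ∈ n.divisors,
      ∑ u : (ZMod n)ˣ, (if d ∣ ((u : ZMod n) - 1).val then d.totient else 0) = n.totient := by
    intro d hd
    have hd := Nat.dvd_of_mem_divisors hd
    rw [← sum_filter, sum_const, smul_eq_mul, ← card_ker_unitsMap_mul_totient hd,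
      ← Nat.card_eq_finsetCard]
    congr 1
    exact Nat.card_congr (Equiv.subtypeEquivRight fun u => by
      simp only [mem_filter, mem_univ, true_and, dvd_val_sub_one_iff_unitsMap_eq_one hd,
        MonoidHom.mem_ker])
  simp_rw [Nat.gcd_eq_sum_totient (NeZero.ne n), sum_filter]
  rw [sum_comm, sum_congr rfl hcount, sum_const, smul_eq_mul, mul_comm]

end Units

section PrimePow

variable {p k : ℕ}

theorem isUnit_prime_pow_iff (hp : p.Prime) (hk : k ≠ 0) (a : ZMod (p ^ k)) :
    IsUnit a ↔ castHom (dvd_pow_self p hk) (ZMod p) a ≠ 0 := by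
  have : NeZero (p ^ k) := ⟨pow_ne_zero k hp.ne_zero⟩
  obtain ⟨x, rfl⟩ := natCast_zmod_surjective a
  rw [map_natCast, ne_eq, natCast_eq_zero_iff, isUnit_iff_coprime,
    Nat.coprime_pow_right_iff (Nat.pos_of_ne_zero hk), Nat.coprime_comm, hp.coprime_iff_not_dvd]

theorem isLocalRing_prime_pow (hp : p.Prime) (hk : k ≠ 0) : IsLocalRing (ZMod (p ^ k)) := by
  have : Fact (1 < p ^ k) := ⟨Nat.one_lt_pow hk hp.one_lt⟩
  have : Fact p.Prime := ⟨hp⟩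
  refine IsLocalRing.of_isUnit_or_isUnit_one_sub_self fun a => ?_
  simp only [isUnit_prime_pow_iff hp hk, map_sub, map_one]
  by_contra! h
  rw [h.1, sub_zero] at h
  exact one_ne_zero h.2

end PrimePow

end ZMod

theorem isRegularMod_iff_isVonNeumannRegular (k n : ℕ) :
    IsRegularMod k n ↔ IsVonNeumannRegular (k : ZMod n) := by
  simp only [IsRegularMod, IsVonNeumannRegular, ← ZMod.intCast_zmod_eq_zero_iff_dvd]
  constructor
  · rintro ⟨x, hx⟩
    refine ⟨x, ?_⟩
    push_cast at hx
    linear_combination hx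
  · rintro ⟨x, hx⟩
    obtain ⟨y, rfl⟩ := ZMod.intCast_surjective x
    refine ⟨y, ?_⟩
    push_cast
    linear_combination hx

theorem sum_reg_eq_sum_zmod (n : ℕ) [NeZero n] :
    ∑ k ∈ Reg n, (k - 1).gcd n =
      ∑ a : ZMod n with IsVonNeumannRegular a, (a - 1).val.gcd n := by
  have hreg : ∀ k, k ∈ Reg n ↔ k ∈ Icc 1 n ∧ IsVonNeumannRegular (k : ZMod n) := by
    intro k
    rw [Reg, mem_filter, isRegularMod_iff_isVonNeumannRegular]
  have hcast : ∀ a : ZMod n, (((a - 1).val + 1 : ℕ) : ZMod n) = a := fun a => by simp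
  refine sum_nbij' (fun k => (k : ZMod n)) (fun a => (a - 1).val + 1) ?_ ?_ ?_ ?_ ?_
  · intro k hk
    simpa using ((hreg k).1 hk).2
  · intro a ha
    refine (hreg _).2 ⟨mem_Icc.2 ⟨by omega, ZMod.val_lt (a - 1)⟩, ?_⟩
    rw [hcast]
    simpa using ha
  · intro k hk
    have hk := ((hreg k).1 hk).1
    show ((k : ZMod n) - 1).val + 1 = k
    rw [ZMod.val_natCast_sub_one hk, Nat.sub_add_cancel (mem_Icc.1 hk).1]
  · intro a _
    exact hcast a
  · intro k hk
    rw [ZMod.val_natCast_sub_one ((hreg k).1 hk).1]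

theorem sum_regular_gcd_mul {m n : ℕ} [NeZero m] [NeZero n] [NeZero (m * n)] (h : m.Coprime n) :
    ∑ a : ZMod (m * n) with IsVonNeumannRegular a, (a - 1).val.gcd (m * n) =
      (∑ b : ZMod m with IsVonNeumannRegular b, (b - 1).val.gcd m) *
        ∑ c : ZMod n with IsVonNeumannRegular c, (c - 1).val.gcd n := by
  let e := ZMod.chineseRemainder h
  have hgcd : ∀ a : ZMod (m * n), a.val.gcd (m * n) = (e a).1.val.gcd m * (e a).2.val.gcd n := by
    intro a
    obtain ⟨x, rfl⟩ := ZMod.natCast_zmod_surjective a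
    simp only [map_natCast, Prod.fst_natCast, Prod.snd_natCast, ZMod.gcd_val_natCast]
    exact Nat.Coprime.gcd_mul x h
  rw [sum_mul_sum, ← sum_product']
  refine sum_equiv e.toEquiv (fun a => ?_) (fun a _ => ?_)
  · simp only [mem_filter, mem_univ, true_and, mem_product, RingEquiv.toEquiv_eq_coe,
      EquivLike.coe_coe, ← Prod.isVonNeumannRegular_iff, isVonNeumannRegular_map_iff]
  · simpa only [RingEquiv.toEquiv_eq_coe, EquivLike.coe_coe, map_sub, map_one, Prod.fst_sub,
      Prod.snd_sub, Prod.fst_one, Prod.snd_one] using hgcd (a - 1)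

theorem sum_regular_gcd_prime_pow {p k : ℕ} [NeZero (p ^ k)] (hp : p.Prime) (hk : k ≠ 0) :
    ∑ a : ZMod (p ^ k) with IsVonNeumannRegular a, (a - 1).val.gcd (p ^ k) =
      (p ^ k).totient * (p ^ k).divisors.card + 1 := by
  have := ZMod.isLocalRing_prime_pow hp hk
  have hreg : (univ.filter fun a : ZMod (p ^ k) => IsVonNeumannRegular a) =
      insert 0 (univ.map ⟨Units.val, Units.val_injective⟩) := by
    ext a
    simp [IsLocalRing.isVonNeumannRegular_iff, IsUnit, or_comm, eq_comm]
  rw [hreg, sum_insert (by simp), sum_map, Function.Embedding.coeFn_mk,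
    ZMod.sum_units_gcd_val_sub_one, zero_sub, add_comm]
  congr
  exact ZMod.val_coe_unit_coprime (-1)

theorem mem_unitaryDivisors_iff {d n : ℕ} :
    d ∈ unitaryDivisors n ↔ n ≠ 0 ∧ ∃ e, d * e = n ∧ d.Coprime e := by
  simp only [unitaryDivisors, mem_filter, Nat.mem_divisors]
  constructor
  · rintro ⟨⟨hd, hn⟩, hcop⟩
    exact ⟨hn, n / d, Nat.mul_div_cancel' hd, hcop⟩
  · rintro ⟨hn, e, rfl, hcop⟩
    have hd : 0 < d := Nat.pos_of_ne_zero (left_ne_zero_of_mul hn)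
    exact ⟨⟨dvd_mul_right d e, hn⟩, by rwa [Nat.mul_div_cancel_left e hd]⟩

theorem dvd_of_mem_unitaryDivisors {d n : ℕ} (hd : d ∈ unitaryDivisors n) : d ∣ n :=
  Nat.dvd_of_mem_divisors (mem_filter.1 hd).1

/-- A unitary divisor `d` of `m * n` splits as `gcd(d, m) * gcd(d, n)`, because
`gcd(k, m * n) = gcd(k, m) * gcd(k, n)` for coprime `m`, `n`. -/
theorem Nat.Coprime.unitaryDivisors_mul {m n : ℕ} (h : m.Coprime n) :
    unitaryDivisors (m * n) =
      (unitaryDivisors m ×ˢ unitaryDivisors n).image fun q => q.1 * q.2 := by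
  ext d
  simp only [mem_image, mem_product, Prod.exists, mem_unitaryDivisors_iff, mul_ne_zero_iff]
  constructor
  · rintro ⟨⟨hm, hn⟩, e, hde, hcop⟩
    have hsplit : ∀ k : ℕ, k ∣ m * n → k.gcd d * k.gcd e = k := fun k hk => by
      rw [← Nat.Coprime.gcd_mul k hcop, hde, Nat.gcd_eq_left hk]
    refine ⟨m.gcd d, n.gcd d,
      ⟨⟨hm, m.gcd e, hsplit m (Nat.dvd_mul_right m n), hcop.gcd_both m m⟩,
        hn, n.gcd e, hsplit n (Nat.dvd_mul_left n m), hcop.gcd_both n n⟩, ?_⟩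
    rw [Nat.gcd_comm, Nat.gcd_comm n, ← Nat.Coprime.gcd_mul d h,
      Nat.gcd_eq_left (Dvd.intro e hde)]
  · rintro ⟨a, b, ⟨⟨hm, e, rfl, hae⟩, hn, f, rfl, hbf⟩, rfl⟩
    have haf : a.Coprime f :=
      h.coprime_dvd_left (Nat.dvd_mul_right a e) |>.coprime_dvd_right (Nat.dvd_mul_left f b)
    have hbe : b.Coprime e :=
      h.symm.coprime_dvd_left (Nat.dvd_mul_right b f) |>.coprime_dvd_right (Nat.dvd_mul_left e a)
    exact ⟨⟨hm, hn⟩, e * f, by ring, (hae.mul_right haf).mul_left (hbe.mul_right hbf)⟩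

theorem unitaryDivisors_prime_pow {p : ℕ} (hp : p.Prime) (k : ℕ) :
    unitaryDivisors (p ^ k) = {1, p ^ k} := by
  ext d
  simp only [mem_unitaryDivisors_iff, mem_insert, mem_singleton]
  constructor
  · rintro ⟨-, e, hde, hcop⟩
    by_contra! hne
    have hp_dvd : ∀ c, c ∣ p ^ k → c ≠ 1 → p ∣ c := fun c hc hc1 => by
      obtain ⟨i, -, rfl⟩ := (Nat.dvd_prime_pow hp).1 hc
      exact dvd_pow_self p (by rintro rfl; exact hc1 (pow_zero p))
    have he1 : e ≠ 1 := by rintro rfl; exact hne.2 (by simpa using hde)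
    exact Nat.not_coprime_of_dvd_of_dvd hp.one_lt (hp_dvd d (Dvd.intro e hde) hne.1)
      (hp_dvd e (Dvd.intro_left d hde) he1) hcop
  · have hpk : p ^ k ≠ 0 := pow_ne_zero k hp.ne_zero
    rintro (rfl | rfl)
    · exact ⟨hpk, p ^ k, one_mul _, Nat.coprime_one_left _⟩
    · exact ⟨hpk, 1, mul_one _, Nat.coprime_one_right _⟩

namespace ArithmeticFunction

variable {R : Type*} [CommSemiring R]

def unitarySum (f : ArithmeticFunction R) : ArithmeticFunction R :=
  ⟨fun n => ∑ d ∈ unitaryDivisors n, f d, by simp [unitaryDivisors]⟩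

theorem unitarySum_apply (f : ArithmeticFunction R) (n : ℕ) :
    unitarySum f n = ∑ d ∈ unitaryDivisors n, f d := rfl

theorem IsMultiplicative.unitarySum {f : ArithmeticFunction R} (hf : f.IsMultiplicative) :
    (unitarySum f).IsMultiplicative := by
  refine ⟨by simp [unitarySum_apply, unitaryDivisors, filter_singleton, hf.map_one],
    fun {m n} h => ?_⟩
  have hinj : Set.InjOn (fun q : ℕ × ℕ => q.1 * q.2)
      ↑(unitaryDivisors m ×ˢ unitaryDivisors n) :=
    h.mul_injOn_divisors.mono (by gcongr <;> exact filter_subset _ _)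
  simp only [unitarySum_apply, h.unitaryDivisors_mul, sum_image hinj, sum_product, sum_mul_sum]
  refine sum_congr rfl fun a ha => sum_congr rfl fun b hb => hf.map_mul_of_coprime ?_
  exact h.coprime_dvd_left (dvd_of_mem_unitaryDivisors ha)
    |>.coprime_dvd_right (dvd_of_mem_unitaryDivisors hb)

theorem IsMultiplicative.unitarySum_apply_prime_pow {f : ArithmeticFunction R}
    (hf : f.IsMultiplicative) {p k : ℕ} (hp : p.Prime) (hk : k ≠ 0) :
    f.unitarySum (p ^ k) = f (p ^ k) + 1 := by
  rw [unitarySum_apply, unitaryDivisors_prime_pow hp k, sum_pair, hf.map_one, add_comm]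
  exact (Nat.one_lt_pow hk hp.one_lt).ne

end ArithmeticFunction

open ArithmeticFunction

def totientTau : ArithmeticFunction ℕ := ⟨fun n => n.totient * n.divisors.card, by simp⟩

theorem totientTau_apply (n : ℕ) : totientTau n = n.totient * n.divisors.card := rfl

theorem isMultiplicative_totientTau : totientTau.IsMultiplicative := by
  refine ⟨rfl, fun {m n} h => ?_⟩
  simp only [totientTau_apply, Nat.totient_mul h, Nat.Coprime.card_divisors_mul h]
  ring

theorem totientTau_apply_prime_pow {p k : ℕ} (hp : p.Prime) (hk : k ≠ 0) :
    totientTau (p ^ k) = p ^ (k - 1) * (p - 1) * (k + 1) := by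
  rw [totientTau_apply, Nat.totient_prime_pow hp (Nat.pos_of_ne_zero hk), ← sigma_zero_apply,
    sigma_zero_apply_prime_pow hp]

noncomputable def regGcdSum : ArithmeticFunction ℕ :=
  ⟨fun n => ∑ k ∈ Reg n, (k - 1).gcd n, by simp [Reg]⟩

theorem regGcdSum_apply (n : ℕ) : regGcdSum n = ∑ k ∈ Reg n, (k - 1).gcd n := rfl

theorem isMultiplicative_regGcdSum : regGcdSum.IsMultiplicative := by
  refine IsMultiplicative.iff_ne_zero.2 ⟨?_, fun {m n} hm hn h => ?_⟩
  · simp [regGcdSum_apply, Reg, IsRegularMod]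
  · have : NeZero m := ⟨hm⟩
    have : NeZero n := ⟨hn⟩
    have : NeZero (m * n) := ⟨mul_ne_zero hm hn⟩
    simp only [regGcdSum_apply, sum_reg_eq_sum_zmod, sum_regular_gcd_mul h]

theorem regGcdSum_apply_prime_pow {p k : ℕ} (hp : p.Prime) (hk : k ≠ 0) :
    regGcdSum (p ^ k) = totientTau (p ^ k) + 1 := by
  have : NeZero (p ^ k) := ⟨pow_ne_zero k hp.ne_zero⟩
  rw [regGcdSum_apply, sum_reg_eq_sum_zmod, sum_regular_gcd_prime_pow hp hk, totientTau_apply]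

theorem regGcdSum_eq_unitarySum_totientTau : regGcdSum = totientTau.unitarySum := by
  refine (IsMultiplicative.eq_iff_eq_on_prime_powers _ isMultiplicative_regGcdSum _
    isMultiplicative_totientTau.unitarySum).2 fun p k hp => ?_
  rcases eq_or_ne k 0 with rfl | hk
  · rw [pow_zero, isMultiplicative_regGcdSum.map_one,
      isMultiplicative_totientTau.unitarySum.map_one]
  · rw [regGcdSum_apply_prime_pow hp hk,
      isMultiplicative_totientTau.unitarySum_apply_prime_pow hp hk]

theorem menon_analogue_reg (n : ℕ) (hn : 1 ≤ n) :
    (∑ k ∈ Reg n, Nat.gcd (k - 1) n =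
      ∑ d ∈ unitaryDivisors n, d.totient * d.divisors.card) ∧
    (∑ k ∈ Reg n, Nat.gcd (k - 1) n =
      ∏ p ∈ n.primeFactors,
        (p ^ (n.factorization p - 1) * (p - 1) * (n.factorization p + 1) + 1)) := by
  have hunitary : ∑ k ∈ Reg n, Nat.gcd (k - 1) n =
      ∑ d ∈ unitaryDivisors n, d.totient * d.divisors.card :=
    DFunLike.congr_fun regGcdSum_eq_unitarySum_totientTau n
  refine ⟨hunitary, hunitary.trans ?_⟩
  change totientTau.unitarySum n = _
  rw [isMultiplicative_totientTau.unitarySum.multiplicative_factorization _ (by omega),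
    Nat.prod_factorization_eq_prod_primeFactors]
  refine prod_congr rfl fun p hp => ?_
  have hp' := Nat.prime_of_mem_primeFactors hp
  have hk : n.factorization p ≠ 0 := Finsupp.mem_support_iff.1 hp
  rw [isMultiplicative_totientTau.unitarySum_apply_prime_pow hp' hk,
    totientTau_apply_prime_pow hp' hk]
end

section
/- For every n ∈ ℕ, Σ_{k ∈ Reg_n} cos²(kπ/n) = (ρ(n) + μ̄(n))/2, where μ̄(n) = Σ_{d || n} μ(d) is the characteristic function of the squarefull integers (μ̄(n) = 1 if every prime dividing n divides it at least twice, and μ̄(n) = 0 otherwise). -/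
open Finset Real
open scoped Classical

/-- `μ̄(n) = Σ_{d ∥ n} μ(d)`, the characteristic function of the squarefull integers. -/
def mubar (n : ℕ) : ℤ := ∑ d ∈ unitaryDivisors n, ArithmeticFunction.moebius d

/-! With `ζ = exp(2πi/n)` we have `cos²(kπ/n) = (1 + Re ζ^k)/2`, so it suffices to show
`∑_{k ∈ Reg_n} ζ^k = μ̄(n)`. Grouping `k ∈ [1, n]` by `d = n / gcd(k, n)` writes `k = (n/d) j` with
`j` a reduced residue mod `d`; then `ζ^k = exp(2πij/d)`, and `k` is regular iff `d ∥ n`. Finally the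
Ramanujan sum `∑_{j reduced mod d} exp(2πij/d)` equals `μ(d)`: the same grouping shows that these sums,
summed over `d ∣ q`, give `∑_{m=1}^q exp(2πim/q) = [q = 1]`, and Möbius inversion applies. -/

noncomputable def zeta (q : ℕ) : ℂ := Complex.exp (2 * π * Complex.I / q)

lemma isPrimitiveRoot_zeta {q : ℕ} (hq : q ≠ 0) : IsPrimitiveRoot (zeta q) q :=
  Complex.isPrimitiveRoot_exp q hq

lemma zeta_mul_pow {g : ℕ} (hg : g ≠ 0) (d : ℕ) : zeta (g * d) ^ g = zeta d := by
  rw [zeta, zeta, ← Complex.exp_nat_mul, Nat.cast_mul, mul_div_assoc',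
    mul_div_mul_left _ _ (Nat.cast_ne_zero.mpr hg)]

lemma zeta_pow_div_mul {q d : ℕ} (hq : q ≠ 0) (hd : d ∣ q) (j : ℕ) :
    zeta q ^ (q / d * j) = zeta d ^ j := by
  obtain ⟨g, rfl⟩ := hd
  rw [Nat.mul_div_cancel_left g (Nat.pos_of_ne_zero (left_ne_zero_of_mul hq)), pow_mul,
    mul_comm d, zeta_mul_pow (right_ne_zero_of_mul hq)]

lemma re_zeta_pow (q k : ℕ) : (zeta q ^ k).re = Real.cos (2 * π * k / q) := by
  have : (k : ℂ) * (2 * π * Complex.I / q) = ((2 * π * k / q : ℝ) : ℂ) * Complex.I := by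
    push_cast
    ring
  rw [zeta, ← Complex.exp_nat_mul, this, Complex.exp_ofReal_mul_I_re]

lemma IsPrimitiveRoot.sum_Icc_pow {R : Type*} [CommRing R] [IsDomain R] {ζ : R} {q : ℕ}
    (hζ : IsPrimitiveRoot ζ q) : ∑ m ∈ Icc 1 q, ζ ^ m = if q = 1 then 1 else 0 := by
  rcases lt_trichotomy q 1 with hq | rfl | hq
  · simp [Nat.lt_one_iff.mp hq]
  · simp [IsPrimitiveRoot.one_right_iff.mp hζ]
  · rw [if_neg hq.ne', ← Ico_add_one_right_eq_Icc, sum_Ico_eq_sum_range, Nat.add_sub_cancel]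
    simp_rw [pow_add, pow_one, ← mul_sum, hζ.geom_sum_eq_zero hq, mul_zero]

def coprimeIcc (d : ℕ) : Finset ℕ := {j ∈ Icc 1 d | j.Coprime d}

lemma filter_gcd_eq_image_coprimeIcc {g : ℕ} (hg : g ≠ 0) (e : ℕ) :
    {m ∈ Icc 1 (g * e) | m.gcd (g * e) = g} = (coprimeIcc e).image (g * ·) := by
  ext m
  simp only [coprimeIcc, mem_filter, mem_Icc, mem_image]
  constructor
  · rintro ⟨⟨hm1, hme⟩, hgcd⟩
    obtain ⟨j, rfl⟩ : g ∣ m := hgcd ▸ Nat.gcd_dvd_left m (g * e)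
    rw [Nat.gcd_mul_left, Nat.mul_eq_left hg] at hgcd
    have hje : j ≤ e := Nat.le_of_mul_le_mul_left hme (Nat.pos_of_ne_zero hg)
    exact ⟨j, ⟨⟨Nat.pos_of_mul_pos_left hm1, hje⟩, hgcd⟩, rfl⟩
  · rintro ⟨j, ⟨⟨hj1, hje⟩, hcop⟩, rfl⟩
    refine ⟨⟨Nat.mul_pos (Nat.pos_of_ne_zero hg) hj1, Nat.mul_le_mul_left g hje⟩, ?_⟩
    rw [Nat.gcd_mul_left, hcop.gcd_eq_one, mul_one]

lemma sum_Icc_eq_sum_divisors_sum_coprimeIcc {M : Type*} [AddCommMonoid M] (q : ℕ)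
    (f : ℕ → M) :
    ∑ m ∈ Icc 1 q, f m = ∑ d ∈ q.divisors, ∑ j ∈ coprimeIcc d, f (q / d * j) := by
  rw [← sum_fiberwise_of_maps_to (g := (·.gcd q)) (t := q.divisors), ← Nat.sum_div_divisors]
  · refine sum_congr rfl fun d hd => ?_
    obtain ⟨hdq, hq⟩ := Nat.mem_divisors.mp hd
    have hqd : q = q / d * d := (Nat.div_mul_cancel hdq).symm
    generalize q / d = g at hqd ⊢
    subst hqd
    have hg : g ≠ 0 := left_ne_zero_of_mul hq
    rw [filter_gcd_eq_image_coprimeIcc hg,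
      sum_image fun _ _ _ _ h => Nat.eq_of_mul_eq_mul_left (Nat.pos_of_ne_zero hg) h]
  · intro m hm
    simp only [mem_Icc] at hm
    exact Nat.mem_divisors.mpr ⟨Nat.gcd_dvd_right m q, by omega⟩

open scoped ArithmeticFunction.Moebius in
lemma sum_coprimeIcc_zeta_pow (q : ℕ) : ∑ j ∈ coprimeIcc q, zeta q ^ j = μ q := by
  rcases q.eq_zero_or_pos with rfl | hq
  · simp [coprimeIcc]
  have hsum : ∀ n > 0,
      ∑ d ∈ n.divisors, ∑ j ∈ coprimeIcc d, zeta d ^ j = if n = 1 then 1 else 0 := by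
    intro n hn
    rw [← (isPrimitiveRoot_zeta hn.ne').sum_Icc_pow, sum_Icc_eq_sum_divisors_sum_coprimeIcc]
    exact sum_congr rfl fun d hd => sum_congr rfl fun j _ =>
      (zeta_pow_div_mul hn.ne' (Nat.dvd_of_mem_divisors hd) j).symm
  rw [← ArithmeticFunction.sum_eq_iff_sum_smul_moebius_eq.mp hsum q hq,
    Nat.sum_divisorsAntidiagonal' (f := fun a b => μ a • if b = 1 then (1 : ℂ) else 0)]
  simp [hq.ne']

lemma Int.exists_dvd_mul_sub_one_iff_isCoprime {a d : ℤ} :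
    (∃ x, d ∣ a * x - 1) ↔ IsCoprime a d := by
  constructor
  · rintro ⟨x, y, hy⟩
    exact ⟨x, -y, by linear_combination hy⟩
  · rintro ⟨u, v, huv⟩
    exact ⟨u, -v, by linear_combination huv⟩

lemma isRegularMod_mul_iff_s11 {g j d : ℕ} (hg : g ≠ 0) (hj : j.Coprime d) :
    IsRegularMod (g * j) (g * d) ↔ g.Coprime d := by
  have hjd : IsCoprime (d : ℤ) j := (Nat.isCoprime_iff_coprime.mpr hj).symm
  have hfac (x : ℤ) :
      ((g * j : ℕ) : ℤ) ^ 2 * x - (g * j : ℕ) = g * (j * (g * j * x - 1)) := by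
    push_cast; ring
  calc IsRegularMod (g * j) (g * d) ↔ ∃ x : ℤ, (d : ℤ) ∣ (g * j : ℕ) * x - 1 := by
        refine exists_congr fun x => ?_
        rw [hfac, Nat.cast_mul, mul_dvd_mul_iff_left (Int.natCast_ne_zero.mpr hg)]
        push_cast
        exact ⟨hjd.dvd_of_dvd_mul_left, (Dvd.dvd.mul_left · _)⟩
    _ ↔ g.Coprime d := by
        rw [Int.exists_dvd_mul_sub_one_iff_isCoprime, Nat.isCoprime_iff_coprime,
          Nat.coprime_mul_iff_left, and_iff_left hj]

lemma sum_reg_zeta_pow (n : ℕ) : ∑ k ∈ Reg n, zeta n ^ k = mubar n := by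
  rw [Reg, sum_filter, sum_Icc_eq_sum_divisors_sum_coprimeIcc, mubar, unitaryDivisors, sum_filter]
  push_cast
  refine sum_congr rfl fun d hd => ?_
  obtain ⟨hdn, hn⟩ := Nat.mem_divisors.mp hd
  have hreg : ∀ j ∈ coprimeIcc d, IsRegularMod (n / d * j) n ↔ d.Coprime (n / d) := by
    intro j hj
    nth_rw 2 [← Nat.div_mul_cancel hdn]
    have hnd : n / d ≠ 0 :=
      (Nat.div_ne_zero_iff_of_dvd hdn).mpr ⟨hn, (Nat.pos_of_mem_divisors hd).ne'⟩
    rw [isRegularMod_mul_iff_s11 hnd (mem_filter.mp hj).2, Nat.coprime_comm]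
  split_ifs with hc
  · rw [← sum_coprimeIcc_zeta_pow]
    exact sum_congr rfl fun j hj => by rw [if_pos ((hreg j hj).mpr hc), zeta_pow_div_mul hn hdn]
  · exact sum_eq_zero fun j hj => if_neg (mt (hreg j hj).mp hc)

theorem sum_cos_sq_reg_general (n : ℕ) :
    ∑ k ∈ Reg n, Real.cos (k * Real.pi / n) ^ 2 =
      (((Reg n).card : ℝ) + (mubar n : ℝ)) / 2 := by
  have hcos (k : ℕ) : Real.cos (k * π / n) ^ 2 = 1 / 2 + (zeta n ^ k).re / 2 := by
    rw [re_zeta_pow, Real.cos_sq]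
    congr 3
    ring
  have hre : ∑ k ∈ Reg n, (zeta n ^ k).re = mubar n := by
    rw [← Complex.re_sum, sum_reg_zeta_pow, Complex.intCast_re]
  simp only [hcos, sum_add_distrib, ← sum_div, hre, sum_const, nsmul_eq_mul]
  ring

theorem sum_cos_sq_reg (n : ℕ) (hn : 1 ≤ n) :
    ∑ k ∈ Reg n, Real.cos (k * Real.pi / n) ^ 2 =
      (((Reg n).card : ℝ) + (mubar n : ℝ)) / 2 :=
  sum_cos_sq_reg_general n
end
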